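/- Let S be a nonempty subset of the nonnegative integers and X(S) the S-gap shift. Then X(S) is mixing if and only if gcd{n + 1 : n ∈ S} = 1. -/

import Mathlib

/-!
The `S`-gap shift is the closure of the set of gap concatenations, so both have the same words.
In a gap concatenation the distance between two `1`s is a sum of gaps `s + 1` with `s ∈ S`, so a
common divisor `d` of the gaps divides it. Mixing yields words `1 w 1` whose two `1`s are at
distance `n` for every large `n`, forcing `d ∣ 1`. Conversely, if the gaps have gcd one then
every large number is a sum of gaps (`Nat.exists_mem_closure_of_ge`). Gap concatenations can be
spliced at `1`s, so a point showing `u` can be continued by any prescribed gap sum and then by a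
point showing `v`, which joins `u` to `v` by fillers of every large length.
-/

open Set Filter

/-- The product topology on `ℤ → A`, where the alphabet `A` carries the
discrete topology. -/
def seqTop (A : Type*) : TopologicalSpace (ℤ → A) :=
  @Pi.topologicalSpace ℤ (fun _ => A) (fun _ => ⊥)

/-- The shift map `σ`, defined by `σ(x)_i = x_{i+1}`. -/
def shiftMap {A : Type*} (x : ℤ → A) : ℤ → A := fun i => x (i + 1)

/-- A shift space: a nonempty, closed, shift-invariant subset of `A^ℤ`. -/
def IsShiftSpace {A : Type*} (X : Set (ℤ → A)) : Prop :=
  X.Nonempty ∧ @IsClosed _ (seqTop A) X ∧ shiftMap '' X = X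

/-- The word `u` occurs in `x` at coordinate `i`. -/
def OccursAt {A : Type*} (x : ℤ → A) (u : List A) (i : ℤ) : Prop :=
  ∀ k : Fin u.length, x (i + ((k : ℕ) : ℤ)) = u.get k

/-- `u` is a word of the language `B(X)` of `X`. -/
def IsWordOf {A : Type*} (X : Set (ℤ → A)) (u : List A) : Prop :=
  ∃ x ∈ X, OccursAt x u 0

/-- A shift of finite type: a shift space defined by finitely many
forbidden words. -/
def IsSFT {A : Type*} (X : Set (ℤ → A)) : Prop :=
  IsShiftSpace X ∧ ∃ F : Finset (List A),
    X = { x | ∀ u ∈ F, ∀ i : ℤ, ¬ OccursAt x u i }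

/-- A code: a continuous shift-commuting map from `X` to `Y`. -/
def IsCode {A B : Type*} (X : Set (ℤ → A)) (Y : Set (ℤ → B))
    (φ : (ℤ → A) → (ℤ → B)) : Prop :=
  Set.MapsTo φ X Y ∧ @ContinuousOn _ _ (seqTop A) (seqTop B) φ X ∧
    ∀ x ∈ X, φ (shiftMap x) = shiftMap (φ x)

/-- A factor code: a surjective code. -/
def IsFactorCode {A B : Type*} (X : Set (ℤ → A)) (Y : Set (ℤ → B))
    (φ : (ℤ → A) → (ℤ → B)) : Prop :=
  IsCode X Y φ ∧ Y ⊆ φ '' X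

/-- A code is open if it maps (relatively) open subsets of `X` to
(relatively) open subsets of `Y`. -/
def IsOpenCode {A B : Type*} (X : Set (ℤ → A)) (Y : Set (ℤ → B))
    (φ : (ℤ → A) → (ℤ → B)) : Prop :=
  ∀ U : Set (ℤ → A), @IsOpen _ (seqTop A) U →
    ∃ V : Set (ℤ → B), @IsOpen _ (seqTop B) V ∧ φ '' (X ∩ U) = Y ∩ V

/-- A code has a uniform lifting length `l`. -/
def HasUniformLiftingLength {A B : Type*} (X : Set (ℤ → A)) (Y : Set (ℤ → B))
    (φ : (ℤ → A) → (ℤ → B)) : Prop :=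
  ∃ l : ℕ, ∀ k : ℕ, ∀ x ∈ X, ∀ y ∈ Y,
    (∀ i : ℤ, |i| ≤ (k : ℤ) + (l : ℤ) → φ x i = y i) →
    ∃ x' ∈ X, (∀ i : ℤ, |i| ≤ (k : ℤ) → x' i = x i) ∧ φ x' = y

/-- Right continuing code. -/
def IsRightContinuing {A B : Type*} (X : Set (ℤ → A)) (Y : Set (ℤ → B))
    (φ : (ℤ → A) → (ℤ → B)) : Prop :=
  ∀ x ∈ X, ∀ y ∈ Y, (∃ M : ℤ, ∀ i ≤ M, φ x i = y i) →
    ∃ x' ∈ X, (∃ M : ℤ, ∀ i ≤ M, x' i = x i) ∧ φ x' = y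

/-- Left continuing code. -/
def IsLeftContinuing {A B : Type*} (X : Set (ℤ → A)) (Y : Set (ℤ → B))
    (φ : (ℤ → A) → (ℤ → B)) : Prop :=
  ∀ x ∈ X, ∀ y ∈ Y, (∃ M : ℤ, ∀ i, M ≤ i → φ x i = y i) →
    ∃ x' ∈ X, (∃ M : ℤ, ∀ i, M ≤ i → x' i = x i) ∧ φ x' = y

/-- `n` is a right continuing retract of `φ`. -/
def IsRightRetract {A B : Type*} (X : Set (ℤ → A)) (Y : Set (ℤ → B))
    (φ : (ℤ → A) → (ℤ → B)) (n : ℕ) : Prop :=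
  ∀ x ∈ X, ∀ y ∈ Y, (∀ i : ℤ, i ≤ 0 → φ x i = y i) →
    ∃ x' ∈ X, φ x' = y ∧ ∀ i : ℤ, i ≤ -(n : ℤ) → x' i = x i

/-- `n` is a left continuing retract of `φ`. -/
def IsLeftRetract {A B : Type*} (X : Set (ℤ → A)) (Y : Set (ℤ → B))
    (φ : (ℤ → A) → (ℤ → B)) (n : ℕ) : Prop :=
  ∀ x ∈ X, ∀ y ∈ Y, (∀ i : ℤ, 0 ≤ i → φ x i = y i) →
    ∃ x' ∈ X, φ x' = y ∧ ∀ i : ℤ, (n : ℤ) ≤ i → x' i = x i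

/-- Right closing code. -/
def IsRightClosing {A B : Type*} (X : Set (ℤ → A))
    (φ : (ℤ → A) → (ℤ → B)) : Prop :=
  ∀ x ∈ X, ∀ x' ∈ X, (∃ M : ℤ, ∀ i ≤ M, x i = x' i) → φ x = φ x' → x = x'

/-- Left closing code. -/
def IsLeftClosing {A B : Type*} (X : Set (ℤ → A))
    (φ : (ℤ → A) → (ℤ → B)) : Prop :=
  ∀ x ∈ X, ∀ x' ∈ X, (∃ M : ℤ, ∀ i, M ≤ i → x i = x' i) → φ x = φ x' → x = x'

/-- A sofic shift: a factor of a shift of finite type. -/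
def IsSofic {B : Type*} (Y : Set (ℤ → B)) : Prop :=
  ∃ (C : Type) (_ : Fintype C) (Z : Set (ℤ → C)) (π : (ℤ → C) → (ℤ → B)),
    IsSFT Z ∧ IsFactorCode Z Y π

/-- Irreducibility of a shift space. -/
def IsIrreducibleShift {A : Type*} (X : Set (ℤ → A)) : Prop :=
  ∀ u v : List A, IsWordOf X u → IsWordOf X v →
    ∃ w : List A, IsWordOf X (u ++ w ++ v)

/-- Mixing shift space. -/
def IsMixingShift {A : Type*} (X : Set (ℤ → A)) : Prop :=
  ∀ u v : List A, IsWordOf X u → IsWordOf X v →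
    ∃ N : ℕ, ∀ n : ℕ, N ≤ n →
      ∃ w : List A, w.length = n ∧ IsWordOf X (u ++ w ++ v)

/-- The almost specification property. -/
def AlmostSpecified {A : Type*} (X : Set (ℤ → A)) : Prop :=
  ∃ N : ℕ, ∀ u v : List A, IsWordOf X u → IsWordOf X v →
    ∃ w : List A, w.length ≤ N ∧ IsWordOf X (u ++ w ++ v)

/-- The specification property. -/
def HasSpecification {A : Type*} (X : Set (ℤ → A)) : Prop :=
  ∃ N : ℕ, ∀ u v : List A, IsWordOf X u → IsWordOf X v →
    ∃ w : List A, w.length = N ∧ IsWordOf X (u ++ w ++ v)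

/-- A synchronizing word of `X`. -/
def IsSynchronizingWord {A : Type*} (X : Set (ℤ → A)) (v : List A) : Prop :=
  IsWordOf X v ∧ ∀ u w : List A, IsWordOf X (u ++ v) → IsWordOf X (v ++ w) →
    IsWordOf X (u ++ v ++ w)

/-- A synchronized system: an irreducible shift space with a synchronizing
word. -/
def IsSynchronizedSystem {A : Type*} (X : Set (ℤ → A)) : Prop :=
  IsIrreducibleShift X ∧ ∃ v : List A, IsSynchronizingWord X v

/-- A subshift of `X`. -/
def IsSubshiftOf {A : Type*} (X' X : Set (ℤ → A)) : Prop :=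
  IsShiftSpace X' ∧ X' ⊆ X

/-- The number of words of length `n` in the language of `X`. -/
noncomputable def wordCount {A : Type*} (X : Set (ℤ → A)) (n : ℕ) : ℕ :=
  Set.ncard { u : List A | u.length = n ∧ IsWordOf X u }

/-- The entropy `h(X) = lim (1/n) log |B_n(X)|` of a shift space (the limit
exists by subadditivity, hence equals the limsup used here). -/
noncomputable def entropy {A : Type*} (X : Set (ℤ → A)) : ℝ :=
  Filter.limsup (fun n : ℕ => Real.log (wordCount X n) / (n : ℝ)) Filter.atTop

/-- The periodic condition `P(X) ↘ P(Y)`. -/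
def PeriodicCondition {A B : Type*} (X : Set (ℤ → A)) (Y : Set (ℤ → B)) : Prop :=
  ∀ n : ℕ, 0 < n → (∃ x ∈ X, shiftMap^[n] x = x) → ∃ y ∈ Y, shiftMap^[n] y = y

/-- A cyclic cover `D_0, …, D_{p-1}` of a shift space `X`. -/
def IsCyclicCover {A : Type*} (X : Set (ℤ → A)) (p : ℕ)
    (D : ZMod p → Set (ℤ → A)) : Prop :=
  0 < p ∧
  (∀ i, @IsClosed _ (seqTop A) (D i) ∧ D i ⊆ X) ∧
  (⋃ i, D i) = X ∧
  (∀ i, shiftMap '' D i = D (i + 1)) ∧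
  (∀ i, ∀ U V : Set (ℤ → A), @IsOpen _ (seqTop A) U → @IsOpen _ (seqTop A) V →
    (D i ∩ U).Nonempty → (D i ∩ V).Nonempty →
    ∃ N : ℕ, ∀ n : ℕ, N ≤ n →
      ((shiftMap^[p * n] '' (D i ∩ U)) ∩ (D i ∩ V)).Nonempty) ∧
  (∀ i j, i ≠ j → ∀ U : Set (ℤ → A), @IsOpen _ (seqTop A) U →
    X ∩ U ⊆ D i ∩ D j → X ∩ U = ∅)

/-- A left ray of `X`, recorded as `z : ℕ → A` where `z n` is the symbol at
coordinate `-(n+1)`. -/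
def IsLeftRay {A : Type*} (X : Set (ℤ → A)) (z : ℕ → A) : Prop :=
  ∃ x ∈ X, ∀ n : ℕ, x (-((n : ℤ) + 1)) = z n

/-- Append the finite word `w` on the right of a left-infinite sequence `z`
(the last symbol of `w` ends up at coordinate `-1`). -/
def rayAppend {A : Type*} (z : ℕ → A) (w : List A) : ℕ → A :=
  fun n => if h : n < w.length then w.reverse.get ⟨n, by simpa using h⟩
           else z (n - w.length)

/-- A left transitive point: every word of `X` occurs in `x_{(-∞,0]}`. -/
def IsLeftTransitive {A : Type*} (X : Set (ℤ → A)) (x : ℤ → A) : Prop :=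
  ∀ u : List A, IsWordOf X u → ∃ i : ℤ, i + (u.length : ℤ) ≤ 1 ∧ OccursAt x u i

/-- A right transitive point: every word of `X` occurs in `x_{[0,∞)}`. -/
def IsRightTransitive {A : Type*} (X : Set (ℤ → A)) (x : ℤ → A) : Prop :=
  ∀ u : List A, IsWordOf X u → ∃ i : ℤ, 0 ≤ i ∧ OccursAt x u i

/-- Right continuing almost everywhere. -/
def IsRightContinuingAE {A B : Type*} (X : Set (ℤ → A)) (Y : Set (ℤ → B))
    (φ : (ℤ → A) → (ℤ → B)) : Prop :=
  ∀ x ∈ X, IsLeftTransitive X x → ∀ y ∈ Y, (∃ M : ℤ, ∀ i ≤ M, φ x i = y i) →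
    ∃ x' ∈ X, (∃ M : ℤ, ∀ i ≤ M, x' i = x i) ∧ φ x' = y

/-- Left continuing almost everywhere. -/
def IsLeftContinuingAE {A B : Type*} (X : Set (ℤ → A)) (Y : Set (ℤ → B))
    (φ : (ℤ → A) → (ℤ → B)) : Prop :=
  ∀ x ∈ X, IsRightTransitive X x → ∀ y ∈ Y, (∃ M : ℤ, ∀ i, M ≤ i → φ x i = y i) →
    ∃ x' ∈ X, (∃ M : ℤ, ∀ i, M ≤ i → x' i = x i) ∧ φ x' = y

/-- The bi-infinite concatenations of blocks `1 0^s`, `s ∈ S`: the positions of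
`1`s in `x` form the range of a strictly monotone `t : ℤ → ℤ` whose
consecutive gaps `t (n+1) - t n` all equal `s + 1` for some `s ∈ S`. -/
def GapConcat (S : Set ℕ) : Set (ℤ → Bool) :=
  { x | ∃ t : ℤ → ℤ, StrictMono t ∧ (∀ n : ℤ, ∃ s ∈ S, t (n + 1) = t n + (s : ℤ) + 1) ∧
      (∀ i : ℤ, x i = true ↔ ∃ n : ℤ, t n = i) }

/-- The `S`-gap shift: the smallest shift space over `{0,1}` containing all
bi-infinite concatenations of blocks from `{1 0^s : s ∈ S}`. -/
def SGapShift (S : Set ℕ) : Set (ℤ → Bool) :=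
  ⋂₀ { X : Set (ℤ → Bool) | IsShiftSpace X ∧ GapConcat S ⊆ X }

theorem seqTop_eq_pi {A : Type*} [TopologicalSpace A] [DiscreteTopology A] :
    seqTop A = Pi.topologicalSpace := by
  rw [seqTop, DiscreteTopology.eq_bot (α := A)]

theorem StrictMono.exists_apply_eq_iff_le {α β : Type*} [LinearOrder α] [Preorder β]
    {f : α → β} (hf : StrictMono f) {a : α} {b : β} (hb : b ≤ f a) :
    (∃ n, f n = b) ↔ ∃ n ≤ a, f n = b :=
  ⟨fun ⟨n, hn⟩ => ⟨n, hf.le_iff_le.1 (hn ▸ hb), hn⟩, fun ⟨n, _, hn⟩ => ⟨n, hn⟩⟩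

theorem StrictMono.exists_apply_eq_iff_ge {α β : Type*} [LinearOrder α] [Preorder β]
    {f : α → β} (hf : StrictMono f) {a : α} {b : β} (hb : f a ≤ b) :
    (∃ n, f n = b) ↔ ∃ n ≥ a, f n = b :=
  ⟨fun ⟨n, hn⟩ => ⟨n, hf.le_iff_le.1 (hn ▸ hb), hn⟩, fun ⟨n, _, hn⟩ => ⟨n, hn⟩⟩

theorem StrictMono.int_apply_add_sub_le {t : ℤ → ℤ} (ht : StrictMono t) {m n : ℤ}
    (hmn : m ≤ n) : t m + (n - m) ≤ t n := by
  induction n, hmn using Int.leInduction with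
  | base => simp
  | succ n _ ih =>
    have := ht (lt_add_one n)
    omega

section ShiftSpace

variable {A : Type*}

theorem occursAt_iff {x : ℤ → A} {u : List A} {i : ℤ} :
    OccursAt x u i ↔ ∀ k (hk : k < u.length), x (i + k) = u[k] :=
  Fin.forall_iff

theorem occursAt_append {x : ℤ → A} {u v : List A} {i : ℤ} :
    OccursAt x (u ++ v) i ↔ OccursAt x u i ∧ OccursAt x v (i + u.length) := by
  simp only [occursAt_iff, List.length_append, List.getElem_append]
  refine ⟨fun h => ⟨fun k hk => ?_, fun k hk => ?_⟩, fun ⟨hu, hv⟩ k hk => ?_⟩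
  · simpa [hk] using h k (by omega)
  · simpa [add_assoc] using h (u.length + k) (by omega)
  · split_ifs with hku
    · exact hu k hku
    · convert hv (k - u.length) (by omega) using 2
      omega

theorem occursAt_singleton {x : ℤ → A} {a : A} {i : ℤ} : OccursAt x [a] i ↔ x i = a := by
  simp [occursAt_iff]

theorem occursAt_ofFn (x : ℤ → A) (i : ℤ) (n : ℕ) :
    OccursAt x (List.ofFn fun k : Fin n => x (i + k)) i := by
  simp [occursAt_iff]

variable [TopologicalSpace A] [DiscreteTopology A]

theorem isOpen_setOf_occursAt (u : List A) (i : ℤ) : IsOpen {x : ℤ → A | OccursAt x u i} := by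
  simp only [OccursAt, ofPred_forall]
  exact isOpen_iInter_of_finite fun k =>
    (continuous_apply (A := fun _ : ℤ => A) (i + (k : ℕ))).isOpen_preimage _
      (isOpen_discrete {u.get k})

theorem isWordOf_closure_iff {X : Set (ℤ → A)} {u : List A} :
    IsWordOf (closure X) u ↔ IsWordOf X u := by
  refine ⟨fun ⟨x, hx, hxu⟩ => ?_, fun ⟨x, hx, hxu⟩ => ⟨x, subset_closure hx, hxu⟩⟩
  obtain ⟨y, hyu, hy⟩ := mem_closure_iff.1 hx _ (isOpen_setOf_occursAt u 0) hxu
  exact ⟨y, hy, hyu⟩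

theorem isShiftSpace_closure {X : Set (ℤ → A)} (hne : X.Nonempty)
    (hX : ∀ x ∈ X, ∀ c : ℤ, (fun i => x (i + c)) ∈ X) : IsShiftSpace (closure X) := by
  have htrans (c : ℤ) : MapsTo (fun (x : ℤ → A) i => x (i + c)) (closure X) (closure X) :=
    fun _ hx => map_mem_closure (continuous_pi fun _ => continuous_apply _) hx (hX · · c)
  refine ⟨hne.closure, by rw [seqTop_eq_pi]; exact isClosed_closure, ?_⟩
  refine (htrans 1).image_subset.antisymm fun x hx => ⟨_, htrans (-1) hx, ?_⟩
  simp

theorem sInter_isShiftSpace_eq_closure {X : Set (ℤ → A)} (hne : X.Nonempty)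
    (hX : ∀ x ∈ X, ∀ c : ℤ, (fun i => x (i + c)) ∈ X) :
    ⋂₀ {Y | IsShiftSpace Y ∧ X ⊆ Y} = closure X := by
  refine subset_antisymm (sInter_subset_of_mem ?_)
    (subset_sInter fun Y hY => closure_minimal hY.2 ?_)
  · exact ⟨isShiftSpace_closure hne hX, subset_closure⟩
  · have hY := hY.1.2.1
    rwa [seqTop_eq_pi] at hY

end ShiftSpace

def IsGapEnumeration (S : Set ℕ) (x : ℤ → Bool) (t : ℤ → ℤ) : Prop :=
  StrictMono t ∧ (∀ n : ℤ, ∃ s ∈ S, t (n + 1) = t n + (s : ℤ) + 1) ∧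
    (∀ i : ℤ, x i = true ↔ ∃ n : ℤ, t n = i)

def periodicGapPoint (s : ℕ) : ℤ → Bool := fun i => decide ((s + 1 : ℤ) ∣ i)

section GapConcat

variable {S : Set ℕ} {x y : ℤ → Bool}

theorem mem_gapConcat_iff : x ∈ GapConcat S ↔ ∃ t, IsGapEnumeration S x t := Iff.rfl

theorem strictMono_of_forall_gap {t : ℤ → ℤ}
    (hgap : ∀ n : ℤ, ∃ s ∈ S, t (n + 1) = t n + (s : ℤ) + 1) : StrictMono t :=
  strictMono_int_of_lt_succ fun n => by obtain ⟨s, -, hs⟩ := hgap n; omega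

theorem IsGapEnumeration.of_forall_gap {t : ℤ → ℤ}
    (hgap : ∀ n : ℤ, ∃ s ∈ S, t (n + 1) = t n + (s : ℤ) + 1)
    (hone : ∀ i : ℤ, x i = true ↔ ∃ n : ℤ, t n = i) : IsGapEnumeration S x t :=
  ⟨strictMono_of_forall_gap hgap, hgap, hone⟩

theorem IsGapEnumeration.translate {t : ℤ → ℤ} (ht : IsGapEnumeration S x t) (c : ℤ) :
    IsGapEnumeration S (fun i => x (i + c)) (fun n => t n - c) := by
  refine .of_forall_gap (fun n => ?_) fun i => ?_
  · obtain ⟨s, hs, h⟩ := ht.2.1 n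
    exact ⟨s, hs, by omega⟩
  · simp only [ht.2.2, sub_eq_iff_eq_add]

theorem exists_isGapEnumeration_apply_zero (hx : x ∈ GapConcat S) {p : ℤ} (hp : x p = true) :
    ∃ t, IsGapEnumeration S x t ∧ t 0 = p := by
  obtain ⟨t, ht⟩ := mem_gapConcat_iff.1 hx
  obtain ⟨m, rfl⟩ := (ht.2.2 p).1 hp
  refine ⟨fun n => t (n + m), .of_forall_gap (fun n => ?_) fun i => ?_, by simp⟩
  · simpa only [add_right_comm n 1 m] using ht.2.1 (n + m)
  · rw [ht.2.2]
    exact ⟨fun ⟨n, hn⟩ => ⟨n - m, by simpa using hn⟩, fun ⟨n, hn⟩ => ⟨n + m, hn⟩⟩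

theorem gapConcat_translate (hx : x ∈ GapConcat S) (c : ℤ) :
    (fun i => x (i + c)) ∈ GapConcat S :=
  let ⟨_, ht⟩ := mem_gapConcat_iff.1 hx
  ⟨_, ht.translate c⟩

theorem periodicGapPoint_mem {s : ℕ} (hs : s ∈ S) : periodicGapPoint s ∈ GapConcat S := by
  refine mem_gapConcat_iff.2
    ⟨fun n => n * (s + 1), .of_forall_gap (fun n => ⟨s, hs, by ring⟩) fun i => ?_⟩
  simp [periodicGapPoint, dvd_iff_exists_eq_mul_left, eq_comm]

theorem gapConcat_nonempty (hS : S.Nonempty) : (GapConcat S).Nonempty :=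
  let ⟨_, hs⟩ := hS
  ⟨_, periodicGapPoint_mem hs⟩

theorem sGapShift_eq_closure (hS : S.Nonempty) : SGapShift S = closure (GapConcat S) :=
  sInter_isShiftSpace_eq_closure (gapConcat_nonempty hS) fun _ hx c => gapConcat_translate hx c

theorem isWordOf_sGapShift (hS : S.Nonempty) :
    IsWordOf (SGapShift S) = IsWordOf (GapConcat S) := by
  ext u
  rw [sGapShift_eq_closure hS, isWordOf_closure_iff]

theorem exists_ge_of_mem_gapConcat (hx : x ∈ GapConcat S) (a : ℤ) :
    ∃ p ≥ a, x p = true := by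
  obtain ⟨t, ht, -, hone⟩ := hx
  have := ht.int_apply_add_sub_le (le_max_left 0 (a - t 0))
  exact ⟨t (max 0 (a - t 0)), by omega, (hone _).2 ⟨_, rfl⟩⟩

theorem exists_le_of_mem_gapConcat (hx : x ∈ GapConcat S) (a : ℤ) :
    ∃ p ≤ a, x p = true := by
  obtain ⟨t, ht, -, hone⟩ := hx
  have := ht.int_apply_add_sub_le (neg_nonpos.2 (le_max_left 0 (t 0 - a)))
  exact ⟨t (-max 0 (t 0 - a)), by omega, (hone _).2 ⟨_, rfl⟩⟩

theorem int_dvd_sub_of_mem_gapConcat {d : ℕ} (hd : ∀ s ∈ S, d ∣ s + 1) (hx : x ∈ GapConcat S)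
    {i j : ℤ} (hi : x i = true) (hj : x j = true) : (d : ℤ) ∣ j - i := by
  obtain ⟨t, -, hgap, hone⟩ := hx
  have hdt (n : ℤ) : (d : ℤ) ∣ t n - t 0 := by
    induction n using Int.induction_on with
    | zero => simp
    | succ n ih =>
      obtain ⟨s, hs, h⟩ := hgap n
      rw [h, show t n + s + 1 - t 0 = t n - t 0 + (s + 1 : ℕ) by push_cast; ring]
      exact dvd_add ih (Int.natCast_dvd_natCast.2 (hd s hs))
    | pred n ih =>
      obtain ⟨s, hs, h⟩ := hgap (-n - 1)
      rw [sub_add_cancel] at h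
      rw [show t (-n - 1) - t 0 = t (-n) - t 0 - (s + 1 : ℕ) by push_cast; omega]
      exact dvd_sub ih (Int.natCast_dvd_natCast.2 (hd s hs))
  obtain ⟨a, rfl⟩ := (hone i).1 hi
  obtain ⟨b, rfl⟩ := (hone j).1 hj
  simpa using dvd_sub (hdt b) (hdt a)

theorem gapConcat_splice_zero (hx : x ∈ GapConcat S) (hy : y ∈ GapConcat S)
    (hx0 : x 0 = true) (hy0 : y 0 = true) :
    ∃ z ∈ GapConcat S, (∀ i ≤ 0, z i = x i) ∧ ∀ i, 0 ≤ i → z i = y i := by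
  obtain ⟨t, ht, ht0⟩ := exists_isGapEnumeration_apply_zero hx hx0
  obtain ⟨r, hr, hr0⟩ := exists_isGapEnumeration_apply_zero hy hy0
  set z : ℤ → Bool := fun i => if i ≤ 0 then x i else y i
  set T : ℤ → ℤ := fun n => if n ≤ 0 then t n else r n
  have hzx (i : ℤ) (hi : i ≤ 0) : z i = x i := if_pos hi
  have hzy (i : ℤ) (hi : 0 ≤ i) : z i = y i := by
    rcases hi.eq_or_lt with rfl | hi
    · rw [hzx 0 le_rfl, hx0, hy0]
    · exact if_neg (by omega)
  have hTt (n : ℤ) (hn : n ≤ 0) : T n = t n := if_pos hn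
  have hTr (n : ℤ) (hn : 0 ≤ n) : T n = r n := by
    rcases hn.eq_or_lt with rfl | hn
    · rw [hTt 0 le_rfl, ht0, hr0]
    · exact if_neg (by omega)
  have hgap (n : ℤ) : ∃ s ∈ S, T (n + 1) = T n + (s : ℤ) + 1 := by
    rcases lt_or_ge n 0 with hn | hn
    · rw [hTt n hn.le, hTt (n + 1) (by omega)]
      exact ht.2.1 n
    · rw [hTr n hn, hTr (n + 1) (by omega)]
      exact hr.2.1 n
  have hT := strictMono_of_forall_gap hgap
  refine ⟨z, ⟨T, hT, hgap, fun i => ?_⟩, hzx, hzy⟩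
  rcases le_total i 0 with hi | hi
  · rw [hzx i hi, ht.2.2, ht.1.exists_apply_eq_iff_le (a := 0) (by rwa [ht0]),
      hT.exists_apply_eq_iff_le (a := 0) (by rwa [hTt 0 le_rfl, ht0])]
    exact exists_congr fun n => and_congr_right fun hn => by rw [hTt n hn]
  · rw [hzy i hi, hr.2.2, hr.1.exists_apply_eq_iff_ge (a := 0) (by rwa [hr0]),
      hT.exists_apply_eq_iff_ge (a := 0) (by rwa [hTr 0 le_rfl, hr0])]
    exact exists_congr fun n => and_congr_right fun hn => by rw [hTr n hn]

theorem gapConcat_splice (hx : x ∈ GapConcat S) (hy : y ∈ GapConcat S) {p q : ℤ}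
    (hp : x p = true) (hq : y q = true) :
    ∃ z ∈ GapConcat S, (∀ i ≤ p, z i = x i) ∧ ∀ i, 0 ≤ i → z (p + i) = y (q + i) := by
  obtain ⟨z, hz, hzx, hzy⟩ := gapConcat_splice_zero (gapConcat_translate hx p)
    (gapConcat_translate hy q) (by simpa using hp) (by simpa using hq)
  refine ⟨_, gapConcat_translate hz (-p), fun i hi => ?_, fun i hi => ?_⟩
  · simpa using hzx (i + -p) (by omega)
  · simpa [add_comm] using hzy (p + i + -p) (by omega)

theorem gapConcat_extend {n : ℕ} (hn : n ∈ AddSubmonoid.closure ((· + 1) '' S))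
    (hx : x ∈ GapConcat S) {p : ℤ} (hp : x p = true) :
    ∃ z ∈ GapConcat S, (∀ i ≤ p, z i = x i) ∧ z (p + n) = true := by
  induction hn using AddSubmonoid.closure_induction generalizing x p with
  | mem _ hg =>
    -- a single gap `s + 1` is appended by splicing in the periodic point of period `s + 1`
    obtain ⟨s, hs, rfl⟩ := hg
    obtain ⟨z, hz, hzx, hzy⟩ := gapConcat_splice hx (periodicGapPoint_mem hs) hp
      (q := 0) (by simp [periodicGapPoint])
    exact ⟨z, hz, hzx, by simpa [periodicGapPoint] using hzy (s + 1) (by omega)⟩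
  | zero => exact ⟨x, hx, fun _ _ => rfl, by simpa using hp⟩
  | add a b _ _ iha ihb =>
    obtain ⟨z, hz, hzx, hza⟩ := iha hx hp
    obtain ⟨z', hz', hz'z, hz'b⟩ := ihb hz hza
    refine ⟨z', hz', fun i hi => (hz'z i (by omega)).trans (hzx i hi), ?_⟩
    simpa [add_assoc] using hz'b

theorem exists_isWordOf_gapConcat_append {N : ℕ}
    (hN : ∀ n ≥ N, n ∈ AddSubmonoid.closure ((· + 1) '' S)) {u v : List Bool}
    (hu : IsWordOf (GapConcat S) u) (hv : IsWordOf (GapConcat S) v) :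
    ∃ M : ℕ, ∀ n ≥ M, ∃ w : List Bool, w.length = n ∧ IsWordOf (GapConcat S) (u ++ w ++ v) := by
  obtain ⟨x, hx, hxu⟩ := hu
  obtain ⟨y, hy, hyv⟩ := hv
  obtain ⟨p, hup, hp⟩ := exists_ge_of_mem_gapConcat hx u.length
  obtain ⟨q, hq0, hq⟩ := exists_le_of_mem_gapConcat hy 0
  -- `z'` follows `x` up to its `1` at `p ≥ |u|`, then gaps summing to `n - C`,
  -- then `y` from its `1` at `q ≤ 0`
  set C := (p - q - u.length).toNat
  refine ⟨N + C, fun n hn => ?_⟩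
  obtain ⟨z, hz, hzx, hzm⟩ := gapConcat_extend (hN (n - C) (by omega)) hx hp
  obtain ⟨z', hz', hz'z, hz'y⟩ := gapConcat_splice hz hy hzm hq
  refine ⟨List.ofFn fun k : Fin n => z' (u.length + k), by simp, z', hz', ?_⟩
  rw [occursAt_append, occursAt_append]
  refine ⟨⟨occursAt_iff.2 fun k hk => ?_, by simpa using occursAt_ofFn z' u.length n⟩,
    occursAt_iff.2 fun k hk => ?_⟩
  · rw [hz'z _ (by omega), hzx _ (by omega)]
    exact occursAt_iff.1 hxu k hk
  · have := hz'y (k - q) (by omega)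
    rw [show q + (k - q) = 0 + k by ring] at this
    rw [← occursAt_iff.1 hyv k hk, ← this]
    have hC : (C : ℤ) = p - q - u.length := Int.toNat_of_nonneg (by omega)
    congr 1
    simp only [List.length_append, List.length_ofFn]
    omega

theorem int_dvd_length_add_one_of_isWordOf {d : ℕ} (hd : ∀ s ∈ S, d ∣ s + 1) {w : List Bool}
    (h : IsWordOf (GapConcat S) ([true] ++ w ++ [true])) : (d : ℤ) ∣ w.length + 1 := by
  obtain ⟨x, hx, hxw⟩ := h
  simp only [occursAt_append, occursAt_singleton] at hxw
  obtain ⟨⟨h0, -⟩, h1⟩ := hxw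
  simpa [add_comm] using int_dvd_sub_of_mem_gapConcat hd hx h0 h1

end GapConcat

/-- The `S`-gap shift is mixing iff
`gcd {n + 1 : n ∈ S} = 1`. -/
theorem sGapShift_mixing_iff_gcd_one
    (S : Set ℕ) (hS : S.Nonempty) :
    IsMixingShift (SGapShift S) ↔ ∀ d : ℕ, (∀ n ∈ S, d ∣ n + 1) → d = 1 := by
  rw [IsMixingShift, isWordOf_sGapShift hS]
  constructor
  · intro hmix d hd
    obtain ⟨s, hs⟩ := hS
    have htrue : IsWordOf (GapConcat S) [true] :=
      ⟨_, periodicGapPoint_mem hs, occursAt_singleton.2 (by simp [periodicGapPoint])⟩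
    obtain ⟨N, hN⟩ := hmix _ _ htrue htrue
    have hdvd (n : ℕ) (hn : N ≤ n) : (d : ℤ) ∣ n + 1 := by
      obtain ⟨w, rfl, hw⟩ := hN n hn
      exact int_dvd_length_add_one_of_isWordOf hd hw
    have h1 : (d : ℤ) ∣ 1 := by simpa using dvd_sub (hdvd (N + 1) (by omega)) (hdvd N le_rfl)
    exact Nat.dvd_one.1 (Int.natCast_dvd_natCast.1 h1)
  · intro hgcd u v hu hv
    have hG : Nat.setGcd ((· + 1) '' S) = 1 :=
      hgcd _ fun n hn => Nat.dvd_setGcd_iff.1 dvd_rfl _ (mem_image_of_mem _ hn)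
    obtain ⟨N, hN⟩ := Nat.exists_mem_closure_of_ge ((· + 1) '' S)
    exact exists_isWordOf_gapConcat_append
      (fun n hn => hN n hn (by rw [hG]; exact one_dvd n)) hu hv
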